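/- arXiv:2201.09093 — 4 statements merged into one kernel-verified Lean document; each statement's English description precedes it below -/
import Mathlib

section
/- For undirected graphs G and H, λ_2(↔G □ ↔H) = λ(G □ H), i.e., the strong subgraph 2-arc-connectivity of the Cartesian product of the complete biorientations equals the edge-connectivity of the Cartesian product of the underlying graphs. -/
/-- The set of arcs of a digraph. -/
def Digraph.ArcSet {V : Type*} (D : Digraph V) : Set (V × V) := {p | D.Adj p.1 p.2}

/-- Delete a set of arcs from a digraph. -/
def Digraph.DeleteArcs {V : Type*} (D : Digraph V) (F : Set (V × V)) : Digraph V :=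
  ⟨fun u v => D.Adj u v ∧ (u, v) ∉ F⟩

/-- A digraph is strong if every vertex can reach every other vertex by a directed walk. -/
def Digraph.IsStrong {V : Type*} (D : Digraph V) : Prop :=
  ∀ u v : V, Relation.ReflTransGen D.Adj u v

/-- The arc-strong connectivity: the minimum number of arcs whose removal
destroys strong connectivity. -/
noncomputable def Digraph.arcConn {V : Type*} (D : Digraph V) : ℕ :=
  sInf {k | ∃ F : Set (V × V), F ⊆ D.ArcSet ∧ F.ncard = k ∧ ¬ (D.DeleteArcs F).IsStrong}

noncomputable def Digraph.outDeg {V : Type*} (D : Digraph V) (v : V) : ℕ :=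
  {w | D.Adj v w}.ncard

noncomputable def Digraph.inDeg {V : Type*} (D : Digraph V) (v : V) : ℕ :=
  {w | D.Adj w v}.ncard

/-- Minimum out-degree. -/
noncomputable def Digraph.minOutDeg {V : Type*} (D : Digraph V) : ℕ := ⨅ v, D.outDeg v

/-- Minimum in-degree. -/
noncomputable def Digraph.minInDeg {V : Type*} (D : Digraph V) : ℕ := ⨅ v, D.inDeg v

/-- Cartesian product of digraphs. -/
def Digraph.cartProd {V W : Type*} (G : Digraph V) (H : Digraph W) : Digraph (V × W) :=
  ⟨fun a b => (G.Adj a.1 b.1 ∧ a.2 = b.2) ∨ (a.1 = b.1 ∧ H.Adj a.2 b.2)⟩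

/-- `B` is the arc set of an `S`-strong subgraph of `D`: the arcs of `B` are arcs of `D`,
and the subgraph with vertex set `S` together with all endpoints of `B`, and arc set `B`,
is strongly connected. -/
def Digraph.IsStrongSubgraphOn {V : Type*} (D : Digraph V) (S : Set V) (B : Set (V × V)) :
    Prop :=
  B ⊆ D.ArcSet ∧
  ∀ u ∈ S ∪ {v | ∃ e ∈ B, v = e.1 ∨ v = e.2},
    ∀ w ∈ S ∪ {v | ∃ e ∈ B, v = e.1 ∨ v = e.2},
      Relation.ReflTransGen (fun a b => (a, b) ∈ B) u w

/-- `λ_S(D)`: the maximum number of pairwise arc-disjoint `S`-strong subgraphs of `D`. -/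
noncomputable def Digraph.lambdaS {V : Type*} (D : Digraph V) (S : Set V) : ℕ :=
  sSup {k | ∃ f : Fin k → Set (V × V),
    (∀ i, D.IsStrongSubgraphOn S (f i)) ∧
    ∀ i j, i ≠ j → Disjoint (f i) (f j)}

/-- `λ_k(D)`: the strong subgraph `k`-arc-connectivity. -/
noncomputable def Digraph.lambdaK {V : Type*} (D : Digraph V) (k : ℕ) : ℕ :=
  sInf {m | ∃ S : Set V, S.ncard = k ∧ D.lambdaS S = m}

/-- The complete biorientation of an undirected graph. -/
def SimpleGraph.biorient {V : Type*} (G : SimpleGraph V) : Digraph V := ⟨G.Adj⟩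

/-- Edge-connectivity of an undirected graph: the minimum number of edges whose
removal disconnects the graph. -/
noncomputable def SimpleGraph.edgeConn {V : Type*} (G : SimpleGraph V) : ℕ :=
  sInf {k | ∃ F : Set (Sym2 V), F ⊆ G.edgeSet ∧ F.ncard = k ∧ ¬ (G.deleteEdges F).Connected}

/-- The directed cycle on `n` vertices. -/
def dirCycle (n : ℕ) : Digraph (Fin n) :=
  ⟨fun i j => (j : ℕ) = ((i : ℕ) + 1) % n⟩

/-- The complete biorientation of the cycle on `n` vertices. -/
def biCycle (n : ℕ) : Digraph (Fin n) :=
  ⟨fun i j => (j : ℕ) = ((i : ℕ) + 1) % n ∨ (i : ℕ) = ((j : ℕ) + 1) % n⟩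

/-- The complete digraph on `n` vertices. -/
def completeDigraph (n : ℕ) : Digraph (Fin n) := ⟨fun i j => i ≠ j⟩

/-!
Since `↔G □ ↔H = ↔(G □ H)`, it suffices to show `λ₂(↔K) = λ(K)` for every finite graph `K`,
an arc version of Menger's theorem. Fix `u ≠ v`. If deleting a set `F` of edges separates `u`
from `v`, every `{u, v}`-strong subgraph of `↔K` has an arc leaving the component of `u` in
`K - F`, and the edge of that arc lies in `F`; arc-disjoint subgraphs give distinct edges, so
`λ_{u,v}(↔K) ≤ |F|`. Conversely, if `u` and `v` stay connected after deleting fewer than `t`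
edges, augmenting paths (Ford–Fulkerson with unit capacities) build a `u`–`v` flow of value `t`,
which splits into `t` arc-disjoint `u`–`v` paths; their biorientations are `t` arc-disjoint
`{u, v}`-strong subgraphs.
-/

open Relation

namespace List

variable {α : Type*}

def arcs : List α → List (α × α)
  | a :: b :: l => (a, b) :: arcs (b :: l)
  | _ => []

@[simp] lemma arcs_nil : ([] : List α).arcs = [] := rfl

@[simp] lemma arcs_singleton (a : α) : [a].arcs = [] := rfl

@[simp] lemma arcs_cons_cons (a b : α) (l : List α) :
    (a :: b :: l).arcs = (a, b) :: (b :: l).arcs := rfl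

lemma mem_of_mem_arcs : ∀ {l : List α} {p : α × α}, p ∈ l.arcs → p.1 ∈ l ∧ p.2 ∈ l
  | a :: b :: l, p, hp => by
    rcases mem_cons.1 hp with rfl | hp
    · simp
    · exact (mem_of_mem_arcs hp).imp (mem_cons_of_mem a) (mem_cons_of_mem a)

lemma IsChain.rel_of_mem_arcs {r : α → α → Prop} :
    ∀ {l : List α}, IsChain r l → ∀ {p : α × α}, p ∈ l.arcs → r p.1 p.2
  | a :: b :: l, h, p, hp => by
    rw [isChain_cons_cons] at h
    rcases mem_cons.1 hp with rfl | hp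
    · exact h.1
    · exact h.2.rel_of_mem_arcs hp

lemma Nodup.arcs : ∀ {l : List α}, l.Nodup → l.arcs.Nodup
  | [], _ | [_], _ => by simp
  | a :: b :: l, h => by
    rw [arcs_cons_cons, nodup_cons]
    exact ⟨fun hab => (nodup_cons.1 h).1 (mem_of_mem_arcs hab).1, h.of_cons.arcs⟩

lemma Nodup.swap_notMem_arcs : ∀ {l : List α}, l.Nodup → ∀ {p : α × α}, p ∈ l.arcs →
    p.swap ∉ l.arcs
  | a :: b :: l, h, p, hp, hswap => by
    have ha : a ∉ b :: l := (nodup_cons.1 h).1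
    rw [arcs_cons_cons] at hp hswap
    rcases mem_cons.1 hp with rfl | hp <;> rcases mem_cons.1 hswap with hs | hs
    · simp only [Prod.swap_prod_mk, Prod.mk.injEq] at hs
      exact ha (hs.1 ▸ mem_cons_self)
    · exact ha (mem_of_mem_arcs hs).2
    · have hpa : p.2 = a := congrArg Prod.fst hs
      exact ha (hpa ▸ (mem_of_mem_arcs hp).2)
    · exact h.of_cons.swap_notMem_arcs hp hs

lemma reflTransGen_mem_arcs : ∀ {a : α} {l : List α}, ∀ w ∈ a :: l,
    ReflTransGen (fun x y => (x, y) ∈ (a :: l).arcs) a w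
  | a, [], w, hw => by rw [mem_singleton.1 hw]
  | a, b :: l, w, hw => by
    rcases mem_cons.1 hw with rfl | hw
    · exact .refl
    · exact .head (b := b) (by simp)
        (ReflTransGen.mono (fun _ _ => mem_cons_of_mem _) _ _ (reflTransGen_mem_arcs w hw))

lemma sum_map_arcs {G : Type*} [AddCommGroup G] (f : α → G) :
    ∀ (a : α) (l : List α),
      ((a :: l).arcs.map fun p => f p.1 - f p.2).sum = f a - f ((a :: l).getLast (cons_ne_nil a l))
  | a, [] => by simp
  | a, b :: l => by
    rw [arcs_cons_cons, map_cons, sum_cons, sum_map_arcs f b l, getLast_cons_cons]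
    abel

end List

theorem Relation.ReflTransGen.exists_nodup_isChain {α : Type*} {r : α → α → Prop} {x y : α}
    (h : ReflTransGen r x y) :
    ∃ l, List.IsChain r (x :: l) ∧ (x :: l).Nodup ∧
      (x :: l).getLast (List.cons_ne_nil x l) = y := by
  induction h using Relation.ReflTransGen.head_induction_on with
  | refl => exact ⟨[], .singleton _, List.nodup_singleton _, rfl⟩
  | @head a b hab _ ih =>
    obtain ⟨l, hchain, hnodup, hlast⟩ := ih
    by_cases ha : a ∈ b :: l
    · obtain ⟨s, t, hst⟩ := List.append_of_mem ha
      refine ⟨t, (hst ▸ hchain).right_of_append,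
        (hst ▸ hnodup).sublist (List.sublist_append_right _ _), ?_⟩
      rw [← hlast]
      simp only [hst, List.getLast_append_of_ne_nil _ (List.cons_ne_nil a t)]
    · exact ⟨b :: l, List.isChain_cons_cons.2 ⟨hab, hchain⟩, List.nodup_cons.2 ⟨ha, hnodup⟩,
        by rw [List.getLast_cons_cons, hlast]⟩

theorem Relation.ReflTransGen.exists_rel_of_mem_of_notMem {α : Type*} {r : α → α → Prop}
    {s : Set α} {a b : α} (h : ReflTransGen r a b) (ha : a ∈ s) (hb : b ∉ s) :
    ∃ x y, r x y ∧ x ∈ s ∧ y ∉ s := by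
  induction h with
  | refl => exact absurd ha hb
  | @tail x y _ hxy ih =>
    by_cases hx : x ∈ s
    · exact ⟨x, y, hxy, hx, hb⟩
    · exact ih hx

open Finset Function

lemma Fin.pairwise_disjoint_cons {β : Type*} [PartialOrder β] [OrderBot β] {n : ℕ} {b : β}
    {f : Fin n → β} (hb : ∀ i, Disjoint b (f i)) (hf : Pairwise (Disjoint on f)) :
    Pairwise (Disjoint on (Fin.cons b f : Fin (n + 1) → β)) := by
  intro i j hij
  induction i using Fin.cases <;> induction j using Fin.cases
  · exact absurd rfl hij
  all_goals simp only [onFun, Fin.cons_zero, Fin.cons_succ]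
  · exact hb _
  · exact (hb _).symm
  · exact hf fun h => hij (congrArg Fin.succ h)

namespace Menger

variable {α : Type*} [DecidableEq α]

def netOutflow (A : Finset (α × α)) : α → ℤ := ∑ p ∈ A, (Pi.single p.1 1 - Pi.single p.2 1)

@[simp] lemma netOutflow_empty : netOutflow (∅ : Finset (α × α)) = 0 := sum_empty

lemma netOutflow_union {A B : Finset (α × α)} (h : Disjoint A B) :
    netOutflow (A ∪ B) = netOutflow A + netOutflow B :=
  sum_union h

lemma netOutflow_sdiff {A B : Finset (α × α)} (h : B ⊆ A) :
    netOutflow (A \ B) = netOutflow A - netOutflow B :=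
  sum_sdiff_eq_sub h

lemma netOutflow_image_swap (A : Finset (α × α)) :
    netOutflow (A.image Prod.swap) = -netOutflow A := by
  rw [netOutflow, sum_image Prod.swap_injective.injOn, netOutflow, ← sum_neg_distrib]
  exact sum_congr rfl fun p _ => (neg_sub _ _).symm

lemma netOutflow_filter_add_netOutflow_filter_not (A : Finset (α × α)) (q : α × α → Prop)
    [DecidablePred q] : netOutflow (A.filter q) + netOutflow (A.filter (¬ q ·)) = netOutflow A :=
  sum_filter_add_sum_filter_not A q _

lemma sum_netOutflow (A : Finset (α × α)) (T : Finset α) :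
    ∑ w ∈ T, netOutflow A w =
      #{p ∈ A | p.1 ∈ T ∧ p.2 ∉ T} - (#{p ∈ A | p.1 ∉ T ∧ p.2 ∈ T} : ℤ) := by
  simp only [netOutflow, Finset.sum_apply, Pi.sub_apply]
  rw [sum_comm, natCast_card_filter, natCast_card_filter, ← sum_sub_distrib]
  refine sum_congr rfl fun p _ => ?_
  rw [sum_sub_distrib, sum_pi_single', sum_pi_single']
  split_ifs <;> simp_all

lemma netOutflow_toFinset_arcs {a : α} {l : List α} (h : (a :: l).Nodup) :
    netOutflow (a :: l).arcs.toFinset =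
      Pi.single a 1 - Pi.single ((a :: l).getLast (List.cons_ne_nil a l)) 1 := by
  rw [netOutflow, List.sum_toFinset _ h.arcs]
  exact List.sum_map_arcs (fun w => (Pi.single w 1 : α → ℤ)) a l

theorem exists_dipath {r : α → α → Prop} {u v : α} (h : ReflTransGen r u v) :
    ∃ S : Finset (α × α), (∀ p ∈ S, r p.1 p.2) ∧ (∀ p ∈ S, p.swap ∉ S) ∧
      netOutflow S = Pi.single u 1 - Pi.single v 1 ∧
      ∀ w, (w = v ∨ ∃ p ∈ S, w = p.1 ∨ w = p.2) →
        ReflTransGen (fun a b => (a, b) ∈ S) u w := by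
  obtain ⟨l, hchain, hnodup, rfl⟩ := h.exists_nodup_isChain
  refine ⟨(u :: l).arcs.toFinset, fun p hp => hchain.rel_of_mem_arcs (List.mem_toFinset.1 hp),
    fun p hp hswap => hnodup.swap_notMem_arcs (List.mem_toFinset.1 hp) (List.mem_toFinset.1 hswap),
    netOutflow_toFinset_arcs hnodup, fun w hw => ?_⟩
  have hwl : w ∈ u :: l := by
    obtain rfl | ⟨p, hp, rfl | rfl⟩ := hw
    · exact List.getLast_mem _
    · exact (List.mem_of_mem_arcs (List.mem_toFinset.1 hp)).1
    · exact (List.mem_of_mem_arcs (List.mem_toFinset.1 hp)).2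
  simpa only [List.mem_toFinset] using List.reflTransGen_mem_arcs w hwl

/-- The support of a `u`-`v` flow of value `k` in `K` with unit capacities: every edge carries
one unit of flow in one direction or none at all. -/
structure IsFlow (K : SimpleGraph α) (u v : α) (k : ℕ) (A : Finset (α × α)) : Prop where
  adj : ∀ p ∈ A, K.Adj p.1 p.2
  swap_notMem : ∀ p ∈ A, p.swap ∉ A
  netOutflow_eq : netOutflow A = k • (Pi.single u 1 - Pi.single v 1)

variable {K : SimpleGraph α} {u v : α} {k : ℕ} {A : Finset (α × α)}

lemma isFlow_empty : IsFlow K u v 0 ∅ := ⟨by simp, by simp, by simp⟩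

lemma IsFlow.sum_netOutflow_eq (hA : IsFlow K u v k A) {T : Finset α} (hu : u ∈ T)
    (hv : v ∉ T) : ∑ w ∈ T, netOutflow A w = k := by
  simp only [hA.netOutflow_eq, Pi.smul_apply, Pi.sub_apply, nsmul_eq_mul, ← mul_sum,
    sum_sub_distrib, sum_pi_single', if_pos hu, if_neg hv]
  simp

lemma IsFlow.reachable [Fintype α] (hA : IsFlow K u v k A) (hk : k ≠ 0) :
    ReflTransGen (fun a b => (a, b) ∈ A) u v := by
  classical
  by_contra hv
  let T := univ.filter (ReflTransGen (fun a b => (a, b) ∈ A) u)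
  have hleave : #{p ∈ A | p.1 ∈ T ∧ p.2 ∉ T} = 0 := by
    refine card_eq_zero.2 (filter_false_of_mem fun p hp ⟨h1, h2⟩ => h2 ?_)
    simp only [T, mem_filter, mem_univ, true_and] at h1 ⊢
    exact h1.tail hp
  have hT := sum_netOutflow A T
  rw [hA.sum_netOutflow_eq (by simp [T, ReflTransGen.refl]) (by simpa [T] using hv), hleave] at hT
  omega

/-- The residual digraph of `A` is `↔K` minus the arcs of `A`: reversing an arc of `A` is
residual because `A` is antisymmetric. Without a residual `u`-`v` path, the arcs of `A` leaving the
residual component of `u` carry the whole flow, so their edges form a cut of size `k`. -/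
lemma IsFlow.exists_cut [Fintype α] (hA : IsFlow K u v k A)
    (h : ¬ ReflTransGen (K.biorient.DeleteArcs ↑A).Adj u v) :
    ∃ F : Finset (Sym2 α), #F ≤ k ∧ ¬ (K.deleteEdges ↑F).Reachable u v := by
  classical
  let T := univ.filter (ReflTransGen (K.biorient.DeleteArcs ↑A).Adj u)
  have hT {a b : α} (ha : a ∈ T) (hab : K.Adj a b) (hb : b ∉ T) : (a, b) ∈ A := by
    by_contra hA'
    simp only [T, mem_filter, mem_univ, true_and] at ha hb
    exact hb (ha.tail ⟨hab, hA'⟩)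
  have henter : #{p ∈ A | p.1 ∉ T ∧ p.2 ∈ T} = 0 :=
    card_eq_zero.2 (filter_false_of_mem fun p hp ⟨h1, h2⟩ =>
      hA.swap_notMem p hp (hT h2 (hA.adj p hp).symm h1))
  have hleave : #{p ∈ A | p.1 ∈ T ∧ p.2 ∉ T} = k := by
    have hT := sum_netOutflow A T
    rw [hA.sum_netOutflow_eq (by simp [T, ReflTransGen.refl]) (by simpa [T] using h), henter] at hT
    omega
  refine ⟨{p ∈ A | p.1 ∈ T ∧ p.2 ∉ T}.image fun p => s(p.1, p.2), hleave ▸ card_image_le,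
    fun hreach => ?_⟩
  obtain ⟨x, y, hxy, hx, hy⟩ := (SimpleGraph.reachable_iff_reflTransGen _ _).1 hreach
    |>.exists_rel_of_mem_of_notMem (s := T) (by simp [T, ReflTransGen.refl]) (by simpa [T] using h)
  rw [SimpleGraph.deleteEdges_adj] at hxy
  exact hxy.2 (mem_coe.2 (mem_image_of_mem _ (mem_filter.2 ⟨hT hx hxy.1 hy, hx, hy⟩)))

/-- Sending one more unit of flow along the residual path `S`: arcs of `S` opposite to arcs of `A`
cancel them, the other arcs of `S` are added. -/
def augment (A S : Finset (α × α)) : Finset (α × α) :=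
  A \ (S.filter (·.swap ∈ A)).image Prod.swap ∪ S.filter (·.swap ∉ A)

lemma netOutflow_augment {S : Finset (α × α)} (hSA : Disjoint S A) :
    netOutflow (augment A S) = netOutflow A + netOutflow S := by
  have hsub : (S.filter (·.swap ∈ A)).image Prod.swap ⊆ A := by
    intro p hp
    obtain ⟨q, hq, rfl⟩ := mem_image.1 hp
    exact (mem_filter.1 hq).2
  rw [augment, netOutflow_union (hSA.symm.mono sdiff_subset (filter_subset _ _)),
    netOutflow_sdiff hsub, netOutflow_image_swap,
    ← netOutflow_filter_add_netOutflow_filter_not S (·.swap ∈ A)]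
  abel

lemma IsFlow.augment {S : Finset (α × α)} (hA : IsFlow K u v k A)
    (hS : ∀ p ∈ S, K.Adj p.1 p.2 ∧ p ∉ A) (hS_swap : ∀ p ∈ S, p.swap ∉ S)
    (hS_netOutflow : netOutflow S = Pi.single u 1 - Pi.single v 1) :
    IsFlow K u v (k + 1) (augment A S) where
  adj p hp := by
    rcases mem_union.1 hp with hp | hp
    · exact hA.adj p (mem_sdiff.1 hp).1
    · exact (hS p (mem_filter.1 hp).1).1
  swap_notMem p hp hp' := by
    simp only [Menger.augment, mem_union, mem_sdiff, mem_filter, Prod.swap_swap] at hp hp'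
    rcases hp with ⟨hpA, -⟩ | ⟨hpS, hpA⟩ <;> rcases hp' with ⟨hpA', -⟩ | ⟨hpS', hpA'⟩
    · exact hA.swap_notMem p hpA hpA'
    · exact hpA' hpA
    · exact hpA hpA'
    · exact hS_swap p hpS hpS'
  netOutflow_eq := by
    rw [netOutflow_augment (disjoint_left.2 fun p hp => (hS p hp).2), hA.netOutflow_eq,
      hS_netOutflow, succ_nsmul]

lemma IsFlow.sdiff {P : Finset (α × α)} (hA : IsFlow K u v (k + 1) A) (hPA : P ⊆ A)
    (hP : netOutflow P = Pi.single u 1 - Pi.single v 1) : IsFlow K u v k (A \ P) where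
  adj p hp := hA.adj p (mem_sdiff.1 hp).1
  swap_notMem p hp hp' := hA.swap_notMem p (mem_sdiff.1 hp).1 (mem_sdiff.1 hp').1
  netOutflow_eq := by
    rw [netOutflow_sdiff hPA, hA.netOutflow_eq, hP, succ_nsmul, add_sub_cancel_right]

theorem exists_isFlow [Fintype α] {t : ℕ} (h : K.IsEdgeReachable t u v) :
    ∃ A, IsFlow K u v t A := by
  suffices ∀ k ≤ t, ∃ A, IsFlow K u v k A from this t le_rfl
  intro k hk
  induction k with
  | zero => exact ⟨∅, isFlow_empty⟩
  | succ k ih =>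
    obtain ⟨A, hA⟩ := ih (by omega)
    by_cases hres : ReflTransGen (K.biorient.DeleteArcs ↑A).Adj u v
    · obtain ⟨S, hS, hS_swap, hS_netOutflow, -⟩ := exists_dipath hres
      exact ⟨_, hA.augment hS hS_swap hS_netOutflow⟩
    · obtain ⟨F, hFk, hFuv⟩ := hA.exists_cut hres
      have hF : (↑F : Set (Sym2 α)).encard < t := by
        rw [Set.encard_coe_eq_coe_finsetCard]
        exact_mod_cast (by omega : #F < t)
      exact absurd (h hF) hFuv

lemma isStrongSubgraphOn_union_image_swap {P : Finset (α × α)} (hadj : ∀ p ∈ P, K.Adj p.1 p.2)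
    (hreach : ∀ w, (w = v ∨ ∃ p ∈ P, w = p.1 ∨ w = p.2) →
      ReflTransGen (fun a b => (a, b) ∈ P) u w) :
    K.biorient.IsStrongSubgraphOn {u, v} ↑(P ∪ P.image Prod.swap) := by
  let R a b := (a, b) ∈ (↑(P ∪ P.image Prod.swap) : Set (α × α))
  have hR_symm {a b : α} (h : R a b) : R b a := by
    simp only [R, coe_union, coe_image, Set.mem_union, Set.mem_image, mem_coe] at h ⊢
    rcases h with h | ⟨q, hq, hqab⟩
    · exact Or.inr ⟨(a, b), h, rfl⟩
    · have hq_eq : q = (b, a) := by simpa using congrArg Prod.swap hqab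
      exact Or.inl (hq_eq ▸ hq)
  have hfrom_u : ∀ w ∈ ({u, v} : Set α) ∪ {w | ∃ e ∈ (↑(P ∪ P.image Prod.swap) : Set (α × α)),
      w = e.1 ∨ w = e.2}, ReflTransGen R u w := by
    have hmono := ReflTransGen.mono (r := fun a b => (a, b) ∈ P) (p := R)
      (fun a b h => by simp [R, h])
    rintro w (hw | ⟨e, he, hwe⟩)
    · rcases hw with rfl | rfl
      · exact .refl
      · exact hmono _ _ (hreach w (Or.inl rfl))
    · simp only [coe_union, coe_image, Set.mem_union, Set.mem_image, mem_coe] at he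
      refine hmono _ _ (hreach w (Or.inr ?_))
      rcases he with he | ⟨q, hq, rfl⟩
      · exact ⟨e, he, hwe⟩
      · exact ⟨q, hq, hwe.symm⟩
  refine ⟨fun p hp => ?_, fun a ha b hb => ?_⟩
  · simp only [coe_union, coe_image, Set.mem_union, Set.mem_image, mem_coe] at hp
    rcases hp with hp | ⟨q, hq, rfl⟩
    · exact hadj p hp
    · exact (hadj q hq).symm
  · exact (ReflTransGen.mono (fun x y h => hR_symm h) _ _ (hfrom_u a ha).swap).trans
      (hfrom_u b hb)

theorem IsFlow.exists_decomposition [Fintype α] (hA : IsFlow K u v k A) :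
    ∃ f : Fin k → Finset (α × α), (∀ i, f i ⊆ A) ∧ Pairwise (Disjoint on f) ∧
      ∀ i, K.biorient.IsStrongSubgraphOn {u, v} ↑(f i ∪ (f i).image Prod.swap) := by
  induction k generalizing A with
  | zero => exact ⟨Fin.elim0, fun i => i.elim0, fun i => i.elim0, fun i => i.elim0⟩
  | succ k ih =>
    obtain ⟨P, hPA, -, hP_netOutflow, hP_reach⟩ := exists_dipath (hA.reachable k.succ_ne_zero)
    replace hPA : P ⊆ A := fun p hp => hPA p hp
    obtain ⟨f, hfA, hf_disj, hf_strong⟩ := ih (hA.sdiff hPA hP_netOutflow)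
    refine ⟨Fin.cons P f, fun i => ?_, Fin.pairwise_disjoint_cons (fun i => ?_) hf_disj,
      fun i => ?_⟩
    · induction i using Fin.cases
      · simpa using hPA
      · simpa using (hfA _).trans sdiff_subset
    · exact disjoint_of_subset_right (hfA i) disjoint_sdiff
    · induction i using Fin.cases
      · simpa using isStrongSubgraphOn_union_image_swap (fun p hp => hA.adj p (hPA hp)) hP_reach
      · simpa using hf_strong _

lemma disjoint_union_image_swap {P Q : Finset (α × α)} (hA : ∀ p ∈ A, p.swap ∉ A) (hP : P ⊆ A)
    (hQ : Q ⊆ A) (hPQ : Disjoint P Q) :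
    Disjoint (P ∪ P.image Prod.swap) (Q ∪ Q.image Prod.swap) := by
  have hcross {P Q : Finset (α × α)} (hP : P ⊆ A) (hQ : Q ⊆ A) :
      Disjoint P (Q.image Prod.swap) := disjoint_left.2 fun p hp hpQ => by
    obtain ⟨q, hq, rfl⟩ := mem_image.1 hpQ
    exact hA q (hQ hq) (hP hp)
  simp only [disjoint_union_left, disjoint_union_right]
  exact ⟨⟨hPQ, (hcross hQ hP).symm⟩, hcross hP hQ, (disjoint_image Prod.swap_injective).2 hPQ⟩

end Menger

lemma Digraph.lambdaK_le_lambdaS {α : Type*} (D : Digraph α) {S : Set α} {k : ℕ}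
    (hS : S.ncard = k) : D.lambdaK k ≤ D.lambdaS S :=
  Nat.sInf_le ⟨S, hS, rfl⟩

lemma Digraph.lambdaK_two_eq_zero_of_subsingleton {α : Type*} [Subsingleton α] (D : Digraph α) :
    D.lambdaK 2 = 0 := by
  refine Nat.sInf_eq_zero.2 (Or.inr (Set.eq_empty_of_forall_notMem ?_))
  rintro _ ⟨S, hS, -⟩
  obtain ⟨x, y, hxy, -⟩ := Set.ncard_eq_two.1 hS
  exact hxy (Subsingleton.elim x y)

namespace SimpleGraph

variable {α : Type*} {K : SimpleGraph α}

lemma not_reachable_deleteEdges_edgeSet {a b : α} (hab : a ≠ b) :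
    ¬ (K.deleteEdges K.edgeSet).Reachable a b := by
  simpa [deleteEdges_edgeSet] using hab

lemma exists_arc_mem_cut {F : Set (Sym2 α)} {a b : α} (hab : ¬ (K.deleteEdges F).Reachable a b)
    {B : Set (α × α)} (hB : K.biorient.IsStrongSubgraphOn {a, b} B) :
    ∃ p ∈ B, (K.deleteEdges F).Reachable a p.1 ∧ ¬ (K.deleteEdges F).Reachable a p.2 ∧
      s(p.1, p.2) ∈ F := by
  have hB_ab := hB.2 a (Or.inl (by simp)) b (Or.inl (by simp))
  obtain ⟨x, y, hxy, hx, hy⟩ :=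
    hB_ab.exists_rel_of_mem_of_notMem (s := {w | (K.deleteEdges F).Reachable a w}) .rfl hab
  refine ⟨(x, y), hxy, hx, hy, ?_⟩
  by_contra hF
  exact hy (hx.trans (deleteEdges_adj.2 ⟨hB.1 hxy, hF⟩).reachable)

lemma le_ncard_of_not_reachable [Finite α] {F : Set (Sym2 α)} {a b : α}
    (hab : ¬ (K.deleteEdges F).Reachable a b) {k : ℕ} {f : Fin k → Set (α × α)}
    (hf : ∀ i, K.biorient.IsStrongSubgraphOn {a, b} (f i))
    (hf_disj : ∀ i j, i ≠ j → Disjoint (f i) (f j)) : k ≤ F.ncard := by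
  choose g hg hg₁ hg₂ hgF using fun i => exists_arc_mem_cut hab (hf i)
  have hinj : Function.Injective fun i => (⟨s((g i).1, (g i).2), hgF i⟩ : F) := by
    intro i j hij
    rcases Sym2.eq_iff.1 (congrArg Subtype.val hij) with ⟨h₁, h₂⟩ | ⟨h₁, -⟩
    · by_contra hne
      exact Set.disjoint_left.1 (hf_disj i j hne) (hg i) (Prod.ext h₁ h₂ ▸ hg j)
    · exact absurd (h₁ ▸ hg₁ i) (hg₂ j)
  simpa using Nat.card_le_card_of_injective _ hinj

lemma biorient_lambdaS_le_ncard [Finite α] {F : Set (Sym2 α)} {a b : α}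
    (hab : ¬ (K.deleteEdges F).Reachable a b) : K.biorient.lambdaS {a, b} ≤ F.ncard :=
  csSup_le ⟨0, Fin.elim0, fun i => i.elim0, fun i => i.elim0⟩
    fun _ ⟨_, hf, hf_disj⟩ => le_ncard_of_not_reachable hab hf hf_disj

theorem le_biorient_lambdaS [Fintype α] {u v : α} (huv : u ≠ v) {t : ℕ}
    (h : K.IsEdgeReachable t u v) : t ≤ K.biorient.lambdaS {u, v} := by
  classical
  obtain ⟨A, hA⟩ := Menger.exists_isFlow h
  obtain ⟨f, hfA, hf_disj, hf_strong⟩ := hA.exists_decomposition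
  refine le_csSup ⟨K.edgeSet.ncard, fun _ ⟨_, hg, hg_disj⟩ =>
    le_ncard_of_not_reachable (not_reachable_deleteEdges_edgeSet huv) hg hg_disj⟩
    ⟨fun i => ↑(f i ∪ (f i).image Prod.swap), hf_strong, fun i j hij => ?_⟩
  exact disjoint_coe.2
    (Menger.disjoint_union_image_swap hA.swap_notMem (hfA i) (hfA j) (hf_disj hij))

lemma edgeConn_le_ncard {F : Set (Sym2 α)} (hFK : F ⊆ K.edgeSet)
    (hF : ¬ (K.deleteEdges F).Connected) : K.edgeConn ≤ F.ncard :=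
  Nat.sInf_le ⟨F, hFK, rfl, hF⟩

lemma edgeConn_eq_zero_of_subsingleton [Subsingleton α] : K.edgeConn = 0 := by
  rcases isEmpty_or_nonempty α with hα | hα
  · simpa using edgeConn_le_ncard (K := K) (Set.empty_subset _) fun h => hα.elim h.nonempty.some
  · refine Nat.sInf_eq_zero.2 (Or.inr (Set.eq_empty_of_forall_notMem ?_))
    rintro _ ⟨F, -, -, hF⟩
    exact hF .of_subsingleton

lemma isEdgeConnected_edgeConn [Finite α] : K.IsEdgeConnected K.edgeConn := by
  intro u v s hs
  by_contra h
  rw [deleteEdges_eq_inter_edgeSet] at h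
  have h₁ := edgeConn_le_ncard Set.inter_subset_right fun hc => h (hc u v)
  have h₂ := Set.ncard_inter_le_ncard_left s K.edgeSet
  rw [← s.toFinite.cast_ncard_eq, Nat.cast_lt] at hs
  omega

lemma exists_not_reachable_ncard_eq_edgeConn [Nontrivial α] (K : SimpleGraph α) :
    ∃ (F : Set (Sym2 α)) (x y : α), ¬ (K.deleteEdges F).Reachable x y ∧ F.ncard = K.edgeConn := by
  obtain ⟨a, b, hab⟩ := exists_pair_ne α
  obtain ⟨F, -, hF_card, hF⟩ := Nat.sInf_mem (s := {k | ∃ F : Set (Sym2 α), F ⊆ K.edgeSet ∧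
      F.ncard = k ∧ ¬ (K.deleteEdges F).Connected})
    ⟨_, K.edgeSet, subset_rfl, rfl, fun h => not_reachable_deleteEdges_edgeSet hab (h a b)⟩
  obtain ⟨x, y, hxy⟩ : ∃ x y, ¬ (K.deleteEdges F).Reachable x y := by
    simpa [connected_iff, Preconnected] using hF
  exact ⟨F, x, y, hxy, hF_card⟩

theorem biorient_lambdaK_two_eq_edgeConn [Fintype α] (K : SimpleGraph α) :
    K.biorient.lambdaK 2 = K.edgeConn := by
  rcases subsingleton_or_nontrivial α with hα | hα
  · rw [edgeConn_eq_zero_of_subsingleton, K.biorient.lambdaK_two_eq_zero_of_subsingleton]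
  apply le_antisymm
  · obtain ⟨F, x, y, hxy, hF⟩ := K.exists_not_reachable_ncard_eq_edgeConn
    have hne : x ≠ y := fun h => hxy (h ▸ .rfl)
    calc K.biorient.lambdaK 2
        ≤ K.biorient.lambdaS {x, y} := K.biorient.lambdaK_le_lambdaS (Set.ncard_pair hne)
      _ ≤ F.ncard := biorient_lambdaS_le_ncard hxy
      _ = K.edgeConn := hF
  · obtain ⟨a, b, hab⟩ := exists_pair_ne α
    refine le_csInf ⟨_, {a, b}, Set.ncard_pair hab, rfl⟩ ?_
    rintro _ ⟨S, hS, rfl⟩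
    obtain ⟨x, y, hxy, rfl⟩ := Set.ncard_eq_two.1 hS
    exact le_biorient_lambdaS hxy (isEdgeConnected_edgeConn x y)

lemma biorient_cartProd_biorient {β : Type*} (G : SimpleGraph α) (H : SimpleGraph β) :
    G.biorient.cartProd H.biorient = (G □ H).biorient := by
  ext a b
  simp only [Digraph.cartProd, biorient, boxProd_adj]
  tauto

end SimpleGraph

theorem stmt16 {V W : Type*} [Fintype V] [Fintype W]
    (G : SimpleGraph V) (H : SimpleGraph W) :
    (G.biorient.cartProd H.biorient).lambdaK 2 = (G.boxProd H).edgeConn := by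
  rw [SimpleGraph.biorient_cartProd_biorient]
  exact (G □ H).biorient_lambdaK_two_eq_edgeConn
end

section
/- For integers n, m ≥ 2, λ_2(↔K_n □ ↔K_m) = n + m − 2, where ↔K_n is the complete digraph on n vertices. -/
/-! For `S = {u, v}`, every `S`-strong subgraph contains an arc leaving `u`, so arc-disjointness
bounds `λ_S` by the out-degree `(n - 1) + (m - 1)` of `u`. The bound is attained for every pair
`u ≠ v` by the bidirected walks `u → (t, u₂) → (t, v₂) → v` (`t ≠ u₁`) and
`u → (u₁, e) → (v₁, e) → v` (`e ≠ u₂`), which are pairwise arc-disjoint. -/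

open Function

namespace Digraph

variable {V W : Type*}

theorem exists_arc_of_isStrongSubgraphOn {D : Digraph V} {S : Set V} {B : Set (V × V)}
    (hB : D.IsStrongSubgraphOn S B) {u v : V} (hu : u ∈ S) (hv : v ∈ S) (huv : u ≠ v) :
    ∃ w, (u, w) ∈ B := by
  rcases (hB.2 u (.inl hu) v (.inl hv)).cases_head with h | ⟨w, hw, -⟩
  · exact absurd h huv
  · exact ⟨w, hw⟩

theorem card_le_outDeg_of_isStrongSubgraphOn [Finite V] {D : Digraph V} {S : Set V} {k : ℕ}
    {f : Fin k → Set (V × V)} (hf : ∀ i, D.IsStrongSubgraphOn S (f i))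
    (hdisj : Pairwise (Disjoint on f)) {u v : V} (hu : u ∈ S) (hv : v ∈ S) (huv : u ≠ v) :
    k ≤ D.outDeg u := by
  choose w hw using fun i => exists_arc_of_isStrongSubgraphOn (hf i) hu hv huv
  have hinj : Injective w := fun i j hij => by
    by_contra hne
    exact Set.disjoint_left.mp (hdisj hne) (hw i) (hij ▸ hw j)
  calc k = (Set.range w).ncard := by
        rw [Set.ncard_range_of_injective hinj, Nat.card_eq_fintype_card, Fintype.card_fin]
    _ ≤ D.outDeg u := Set.ncard_le_ncard (Set.range_subset_iff.mpr fun i => (hf i).1 (hw i))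

theorem lambdaS_eq_outDeg [Finite V] {D : Digraph V} {S : Set V} {u v : V} (hu : u ∈ S)
    (hv : v ∈ S) (huv : u ≠ v)
    (h : ∃ f : Fin (D.outDeg u) → Set (V × V),
      (∀ i, D.IsStrongSubgraphOn S (f i)) ∧ Pairwise (Disjoint on f)) :
    D.lambdaS S = D.outDeg u := by
  have hub : D.outDeg u ∈ upperBounds {k | ∃ f : Fin k → Set (V × V),
      (∀ i, D.IsStrongSubgraphOn S (f i)) ∧ ∀ i j, i ≠ j → Disjoint (f i) (f j)} :=
    fun _ ⟨_, hf, hdisj⟩ => card_le_outDeg_of_isStrongSubgraphOn hf hdisj hu hv huv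
  exact le_antisymm (csSup_le' hub) (le_csSup ⟨_, hub⟩ h)

theorem lambdaK_eq_of_forall_lambdaS_eq {D : Digraph V} {k c : ℕ}
    (hex : ∃ S : Set V, S.ncard = k) (h : ∀ S : Set V, S.ncard = k → D.lambdaS S = c) :
    D.lambdaK k = c := by
  have : {c' | ∃ S : Set V, S.ncard = k ∧ D.lambdaS S = c'} = {c} := by
    ext c'
    constructor
    · rintro ⟨S, hS, rfl⟩
      exact h S hS
    · rintro rfl
      obtain ⟨S, hS⟩ := hex
      exact ⟨S, hS, h S hS⟩
  rw [lambdaK, this, csInf_singleton]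

theorem outDeg_cartProd [Finite V] [Finite W] {G : Digraph V} {H : Digraph W} {a : V} {c : W}
    (ha : ¬ G.Adj a a) : (G.cartProd H).outDeg (a, c) = G.outDeg a + H.outDeg c := by
  have : {w | (G.cartProd H).Adj (a, c) w} =
      (·, c) '' {x | G.Adj a x} ∪ (a, ·) '' {y | H.Adj c y} := by
    ext ⟨x, y⟩
    simp [cartProd, eq_comm, and_comm]
  rw [outDeg, this, Set.ncard_union_eq, Set.ncard_image_of_injective _ (Prod.mk_left_injective c),
    Set.ncard_image_of_injective _ (Prod.mk_right_injective a)]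
  · rfl
  · rw [Set.disjoint_left]
    rintro _ ⟨x, hx, rfl⟩ ⟨y, -, hxy⟩
    obtain ⟨rfl, -⟩ := Prod.ext_iff.mp hxy
    exact ha hx

end Digraph

theorem outDeg_completeDigraph (n : ℕ) (a : Fin n) : (completeDigraph n).outDeg a = n - 1 := by
  have : {w | (completeDigraph n).Adj a w} = {a}ᶜ := by
    ext; simp [completeDigraph, eq_comm]
  rw [Digraph.outDeg, this, Set.ncard_compl, Set.ncard_singleton, Nat.card_fin]

section BidirArcs

variable {V : Type*}

/-- Loops are discarded, so a list may repeat an entry consecutively: this lets the detours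
below degenerate when `u` and `v` share a coordinate. -/
def bidirArcs : List V → Set (V × V)
  | a :: b :: l => ({(a, b), (b, a)} \ Set.diagonal V) ∪ bidirArcs (b :: l)
  | _ => ∅

theorem mem_of_mem_bidirArcs {l : List V} {p : V × V} (hp : p ∈ bidirArcs l) :
    p.1 ∈ l ∧ p.2 ∈ l := by
  induction l with
  | nil => simp [bidirArcs] at hp
  | cons a l ih =>
    match l, hp, ih with
    | [], hp, _ => simp [bidirArcs] at hp
    | b :: l, hp, ih =>
      rcases hp with ⟨rfl | rfl, -⟩ | hp
      · simp
      · simp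
      · exact (ih hp).imp (List.mem_cons_of_mem a) (List.mem_cons_of_mem a)

theorem bidirArcs_subset_arcSet {D : Digraph V} {l : List V}
    (hl : l.IsChain fun x y => x ≠ y → D.Adj x y ∧ D.Adj y x) : bidirArcs l ⊆ D.ArcSet := by
  induction l with
  | nil => simp [bidirArcs]
  | cons a l ih =>
    match l, hl, ih with
    | [], _, _ => simp [bidirArcs]
    | b :: l, hl, ih =>
      rw [List.isChain_cons_cons] at hl
      rintro p (⟨hab | hba, hne⟩ | hp)
      · subst hab; exact (hl.1 hne).1
      · subst hba; exact (hl.1 (Ne.symm hne)).2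
      · exact ih hl.2 hp

theorem reflTransGen_bidirArcs_head {a u : V} {l : List V} (hu : u ∈ a :: l) :
    Relation.ReflTransGen (fun x y => (x, y) ∈ bidirArcs (a :: l)) a u ∧
      Relation.ReflTransGen (fun x y => (x, y) ∈ bidirArcs (a :: l)) u a := by
  induction l generalizing a with
  | nil =>
    obtain rfl := List.mem_singleton.mp hu
    exact ⟨.refl, .refl⟩
  | cons b l ih =>
    rcases List.mem_cons.mp hu with rfl | hu
    · exact ⟨.refl, .refl⟩
    have hmono := Relation.ReflTransGen.mono
      (r := fun x y => (x, y) ∈ bidirArcs (b :: l))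
      (p := fun x y => (x, y) ∈ bidirArcs (a :: b :: l)) (fun _ _ => Or.inr)
    have hab : Relation.ReflTransGen (fun x y => (x, y) ∈ bidirArcs (a :: b :: l)) a b ∧
        Relation.ReflTransGen (fun x y => (x, y) ∈ bidirArcs (a :: b :: l)) b a := by
      by_cases h : a = b
      · subst h; exact ⟨.refl, .refl⟩
      · exact ⟨.single (.inl ⟨.inl rfl, h⟩), .single (.inl ⟨.inr rfl, Ne.symm h⟩)⟩
    exact ⟨hab.1.trans (hmono _ _ (ih hu).1), (hmono _ _ (ih hu).2).trans hab.2⟩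

theorem Digraph.isStrongSubgraphOn_bidirArcs {D : Digraph V} {S : Set V} {a : V} {l : List V}
    (hl : (a :: l).IsChain fun x y => x ≠ y → D.Adj x y ∧ D.Adj y x)
    (hS : ∀ s ∈ S, s ∈ a :: l) :
    D.IsStrongSubgraphOn S (bidirArcs (a :: l)) := by
  have hmem :
      ∀ x ∈ S ∪ {v | ∃ e ∈ bidirArcs (a :: l), v = e.1 ∨ v = e.2}, x ∈ a :: l := by
    rintro x (hx | ⟨e, he, rfl | rfl⟩)
    exacts [hS x hx, (mem_of_mem_bidirArcs he).1, (mem_of_mem_bidirArcs he).2]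
  exact ⟨bidirArcs_subset_arcSet hl, fun u hu w hw =>
    (reflTransGen_bidirArcs_head (hmem u hu)).2.trans
      (reflTransGen_bidirArcs_head (hmem w hw)).1⟩

end BidirArcs

section CompleteProduct

variable {n m : ℕ}

theorem cartProd_completeDigraph_adj_of_ne {x y : Fin n × Fin m} (hxy : x ≠ y)
    (h : x.1 = y.1 ∨ x.2 = y.2) : ((completeDigraph n).cartProd (completeDigraph m)).Adj x y := by
  obtain ⟨x₁, x₂⟩ := x
  obtain ⟨y₁, y₂⟩ := y
  simp only [Digraph.cartProd, completeDigraph, ne_eq, Prod.mk.injEq] at hxy h ⊢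
  tauto

def detourArcs (u v : Fin n × Fin m) :
    {t // t ≠ u.1} ⊕ {e // e ≠ u.2} → Set ((Fin n × Fin m) × (Fin n × Fin m))
  | .inl t => bidirArcs [u, (t, u.2), (t, v.2), v]
  | .inr e => bidirArcs [u, (u.1, e), (v.1, e), v]

theorem isStrongSubgraphOn_detourArcs (u v : Fin n × Fin m)
    (i : {t // t ≠ u.1} ⊕ {e // e ≠ u.2}) :
    ((completeDigraph n).cartProd (completeDigraph m)).IsStrongSubgraphOn {u, v}
      (detourArcs u v i) := by
  cases i <;> refine Digraph.isStrongSubgraphOn_bidirArcs ?_ (by rintro s (rfl | rfl) <;> simp) <;>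
    simp only [List.isChain_cons_cons, List.isChain_singleton, and_true] <;>
    refine ⟨?_, ?_, ?_⟩ <;> intro hne <;>
    exact ⟨cartProd_completeDigraph_adj_of_ne hne (by simp),
      cartProd_completeDigraph_adj_of_ne (Ne.symm hne) (by simp)⟩

theorem pairwise_disjoint_detourArcs {u v : Fin n × Fin m} (huv : u ≠ v) :
    Pairwise (Disjoint on detourArcs u v) := by
  rintro (⟨t, ht⟩ | ⟨e, he⟩) (⟨t', ht'⟩ | ⟨e', he'⟩) hne <;>
  · rw [onFun, Set.disjoint_left]
    rintro ⟨x, y⟩ hx hy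
    simp only [detourArcs, bidirArcs, Set.mem_union, Set.mem_sdiff, Set.mem_insert_iff,
      Set.mem_singleton_iff, Set.mem_empty_iff_false, or_false, Prod.mk.injEq,
      Set.mem_diagonal_iff] at hx hy
    grind

theorem lambdaS_cartProd_completeDigraph_pair {u v : Fin n × Fin m} (huv : u ≠ v) :
    ((completeDigraph n).cartProd (completeDigraph m)).lambdaS {u, v} = (n - 1) + (m - 1) := by
  have hdeg : ((completeDigraph n).cartProd (completeDigraph m)).outDeg u = (n - 1) + (m - 1) := by
    rw [Digraph.outDeg_cartProd (by simp [completeDigraph]), outDeg_completeDigraph,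
      outDeg_completeDigraph]
  have hcard : Nat.card ({t // t ≠ u.1} ⊕ {e // e ≠ u.2}) = (n - 1) + (m - 1) := by
    simp [Nat.card_eq_fintype_card, Fintype.card_subtype_compl]
  rw [← hdeg]
  refine Digraph.lambdaS_eq_outDeg (.inl rfl) (.inr rfl) huv ?_
  let e := Finite.equivFinOfCardEq (hcard.trans hdeg.symm)
  exact ⟨detourArcs u v ∘ e.symm, fun i => isStrongSubgraphOn_detourArcs u v _,
    (pairwise_disjoint_detourArcs huv).comp_of_injective e.symm.injective⟩

end CompleteProduct

theorem stmt17 (n m : ℕ) (hn : 2 ≤ n) (hm : 2 ≤ m) :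
    ((completeDigraph n).cartProd (completeDigraph m)).lambdaK 2 = n + m - 2 := by
  apply Digraph.lambdaK_eq_of_forall_lambdaS_eq
  · have h01 : ((⟨0, by omega⟩ : Fin n), (⟨0, by omega⟩ : Fin m)) ≠
        (⟨1, by omega⟩, ⟨0, by omega⟩) := by
      simp [Prod.ext_iff]
    exact ⟨_, Set.ncard_pair h01⟩
  · intro S hS
    obtain ⟨u, v, huv, rfl⟩ := Set.ncard_eq_two.mp hS
    rw [lambdaS_cartProd_completeDigraph_pair huv]
    omega
end

section
/- For integers n, m ≥ 3, λ_2(↔C_n □ ↔C_m) = 4, where ↔C_n is the complete biorientation of the cycle on n vertices. -/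
open Relation Set

namespace Digraph

variable {V W : Type*}

def HasDisjointStrongSubgraphs (D : Digraph V) (S : Set V) (k : ℕ) : Prop :=
  ∃ f : Fin k → Set (V × V),
    (∀ i, D.IsStrongSubgraphOn S (f i)) ∧ ∀ i j, i ≠ j → Disjoint (f i) (f j)

theorem lambdaS_eq_sSup (D : Digraph V) (S : Set V) :
    D.lambdaS S = sSup {k | D.HasDisjointStrongSubgraphs S k} := rfl

theorem lambdaK_eq_of_forall {D : Digraph V} {k c : ℕ} (hk : ∃ S : Set V, S.ncard = k)
    (h : ∀ S : Set V, S.ncard = k → D.lambdaS S = c) : D.lambdaK k = c := by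
  obtain ⟨S, hS⟩ := hk
  refine le_antisymm (Nat.sInf_le ⟨S, hS, h S hS⟩) (le_csInf ⟨c, S, hS, h S hS⟩ ?_)
  rintro _ ⟨T, hT, rfl⟩
  exact (h T hT).ge

section StrongSubgraph

variable {D : Digraph V} {S : Set V} {B : Set (V × V)}

theorem IsStrongSubgraphOn.reflTransGen (h : D.IsStrongSubgraphOn S B) {u w : V}
    (hu : u ∈ S) (hw : w ∈ S) : ReflTransGen (fun a b => (a, b) ∈ B) u w :=
  h.2 u (Or.inl hu) w (Or.inl hw)

theorem IsStrongSubgraphOn.exists_arc_from (h : D.IsStrongSubgraphOn S B) {u v : V}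
    (hu : u ∈ S) (hv : v ∈ S) (huv : u ≠ v) : ∃ w, (u, w) ∈ B := by
  rcases (h.reflTransGen hu hv).cases_head with rfl | ⟨w, hw, -⟩
  · exact absurd rfl huv
  · exact ⟨w, hw⟩

theorem isStrongSubgraphOn_of_reflTransGen {L : Set V} (harc : B ⊆ D.ArcSet) (hS : S ⊆ L)
    (hend : ∀ e ∈ B, e.1 ∈ L ∧ e.2 ∈ L)
    (hreach : ∀ x ∈ L, ∀ y ∈ L, ReflTransGen (fun a b => (a, b) ∈ B) x y) :
    D.IsStrongSubgraphOn S B := by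
  have hL : ∀ z ∈ S ∪ {v | ∃ e ∈ B, v = e.1 ∨ v = e.2}, z ∈ L := by
    rintro z (hz | ⟨e, he, rfl | rfl⟩)
    exacts [hS hz, (hend e he).1, (hend e he).2]
  exact ⟨harc, fun u hu w hw => hreach u (hL u hu) w (hL w hw)⟩

theorem IsStrongSubgraphOn.image {E : Digraph W} (φ : V → W)
    (hφ : ∀ x y, D.Adj x y → E.Adj (φ x) (φ y)) (h : D.IsStrongSubgraphOn S B) :
    E.IsStrongSubgraphOn (φ '' S) (Prod.map φ φ '' B) := by
  have hpre : ∀ x ∈ φ '' S ∪ {v | ∃ e ∈ Prod.map φ φ '' B, v = e.1 ∨ v = e.2},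
      ∃ x₀ ∈ S ∪ {v | ∃ e ∈ B, v = e.1 ∨ v = e.2}, φ x₀ = x := by
    rintro x (⟨x₀, hx₀, rfl⟩ | ⟨_, ⟨e, he, rfl⟩, rfl | rfl⟩)
    · exact ⟨x₀, Or.inl hx₀, rfl⟩
    · exact ⟨e.1, Or.inr ⟨e, he, Or.inl rfl⟩, rfl⟩
    · exact ⟨e.2, Or.inr ⟨e, he, Or.inr rfl⟩, rfl⟩
  refine ⟨?_, fun x hx y hy => ?_⟩
  · rintro _ ⟨e, he, rfl⟩
    exact hφ _ _ (h.1 he)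
  · obtain ⟨x₀, hx₀, rfl⟩ := hpre x hx
    obtain ⟨y₀, hy₀, rfl⟩ := hpre y hy
    exact (h.2 x₀ hx₀ y₀ hy₀).lift φ fun a b hab => ⟨(a, b), hab, rfl⟩

end StrongSubgraph

section DisjointStrongSubgraphs

variable {D : Digraph V} {S : Set V} {k : ℕ}

theorem HasDisjointStrongSubgraphs.image {E : Digraph W} (φ : V → W)
    (hinj : Function.Injective φ) (hφ : ∀ x y, D.Adj x y → E.Adj (φ x) (φ y))
    (h : D.HasDisjointStrongSubgraphs S k) : E.HasDisjointStrongSubgraphs (φ '' S) k := by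
  obtain ⟨f, hf, hd⟩ := h
  exact ⟨fun i => Prod.map φ φ '' f i, fun i => (hf i).image φ hφ,
    fun i j hij => (disjoint_image_iff (hinj.prodMap hinj)).2 (hd i j hij)⟩

/-- Each subgraph must leave `u` towards `v`, and no two can use the same arc out of `u`. -/
theorem HasDisjointStrongSubgraphs.le_outDeg (h : D.HasDisjointStrongSubgraphs S k)
    {u v : V} (hu : u ∈ S) (hv : v ∈ S) (huv : u ≠ v) (hfin : {w | D.Adj u w}.Finite) :
    k ≤ D.outDeg u := by
  obtain ⟨f, hf, hd⟩ := h
  choose g hg using fun i => (hf i).exists_arc_from hu hv huv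
  have hinj : Function.Injective g := fun i j hij => by
    by_contra hne
    exact disjoint_left.1 (hd i j hne) (hg i) (hij ▸ hg j)
  simpa [outDeg] using ncard_le_ncard_of_injOn g (s := univ) (fun i _ => (hf i).1 (hg i))
    hinj.injOn hfin

theorem lambdaS_eq_of_outDeg_le (h : D.HasDisjointStrongSubgraphs S k) {u v : V} (hu : u ∈ S)
    (hv : v ∈ S) (huv : u ≠ v) (hfin : {w | D.Adj u w}.Finite) (hk : D.outDeg u ≤ k) :
    D.lambdaS S = k := by
  rw [lambdaS_eq_sSup]
  exact IsGreatest.csSup_eq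
    ⟨h, fun _ hj => (HasDisjointStrongSubgraphs.le_outDeg hj hu hv huv hfin).trans hk⟩

end DisjointStrongSubgraphs

section CartProd

variable {G : Digraph V} {H : Digraph W}

theorem cartProd_adj_swap {x y : W × V} (h : (H.cartProd G).Adj x y) :
    (G.cartProd H).Adj x.swap y.swap := by
  rcases h with ⟨h, e⟩ | ⟨e, h⟩
  exacts [Or.inr ⟨e, h⟩, Or.inl ⟨h, e⟩]

theorem outDeg_cartProd_le [Finite V] [Finite W] (a : V) (b : W) :
    (G.cartProd H).outDeg (a, b) ≤ G.outDeg a + H.outDeg b := by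
  have hsub : {w | (G.cartProd H).Adj (a, b) w} ⊆
      (fun x => (x, b)) '' {x | G.Adj a x} ∪ (fun y => (a, y)) '' {y | H.Adj b y} := by
    rintro ⟨x, y⟩ (⟨hx, rfl⟩ | ⟨rfl, hy⟩)
    exacts [Or.inl ⟨x, hx, rfl⟩, Or.inr ⟨y, hy, rfl⟩]
  calc (G.cartProd H).outDeg (a, b) ≤ _ := ncard_le_ncard hsub
    _ ≤ _ := ncard_union_le _ _
    _ ≤ G.outDeg a + H.outDeg b := add_le_add ncard_image_le ncard_image_le

/-- The comb whose spine is row `r`, traversed along `A`, and whose teeth are the columns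
`c ∈ C`, traversed along `B`. -/
def combArcs (A : Set (V × V)) (B : Set (W × W)) (r : W) (C : Set V) :
    Set ((V × W) × (V × W)) :=
  {e | ((e.1.1, e.2.1) ∈ A ∧ e.1.2 = r ∧ e.2.2 = r) ∨
    (e.1.1 ∈ C ∧ e.2.1 = e.1.1 ∧ (e.1.2, e.2.2) ∈ B)}

def combVerts (r : W) (C : Set V) : Set (V × W) := {x | x.2 = r ∨ x.1 ∈ C}

variable {A A' : Set (V × V)} {B B' : Set (W × W)} {r r' : W} {C C' : Set V}

theorem combArcs_subset_arcSet (hA : A ⊆ G.ArcSet) (hB : B ⊆ H.ArcSet) :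
    combArcs A B r C ⊆ (G.cartProd H).ArcSet := by
  rintro e (⟨hA', hr, hr'⟩ | ⟨-, hc, hB'⟩)
  exacts [Or.inl ⟨hA hA', hr.trans hr'.symm⟩, Or.inr ⟨hc.symm, hB hB'⟩]

theorem mem_combVerts_of_mem_combArcs :
    ∀ e ∈ combArcs A B r C, e.1 ∈ combVerts r C ∧ e.2 ∈ combVerts r C := by
  rintro e (⟨-, hr, hr'⟩ | ⟨hc, hc', -⟩)
  exacts [⟨Or.inl hr, Or.inl hr'⟩, ⟨Or.inr hc, Or.inr (hc' ▸ hc)⟩]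

theorem reflTransGen_combArcs (hA : ∀ x y, ReflTransGen (fun a b => (a, b) ∈ A) x y)
    (hB : ∀ p q, ReflTransGen (fun a b => (a, b) ∈ B) p q) {x y : V × W}
    (hx : x ∈ combVerts r C) (hy : y ∈ combVerts r C) :
    ReflTransGen (fun a b => (a, b) ∈ combArcs A B r C) x y := by
  have spine : ∀ x y : V, ReflTransGen (fun a b => (a, b) ∈ combArcs A B r C) (x, r) (y, r) :=
    fun x y => (hA x y).lift (fun x => (x, r)) fun _ _ h => Or.inl ⟨h, rfl, rfl⟩
  have tooth : ∀ c ∈ C, ∀ p q,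
      ReflTransGen (fun a b => (a, b) ∈ combArcs A B r C) (c, p) (c, q) :=
    fun c hc p q => (hB p q).lift (fun p => (c, p)) fun _ _ h => Or.inr ⟨hc, rfl, h⟩
  have to_spine : ReflTransGen (fun a b => (a, b) ∈ combArcs A B r C) x (x.1, r) := by
    rcases hx with hx | hx
    · rw [← hx]
    · exact tooth x.1 hx x.2 r
  have from_spine : ReflTransGen (fun a b => (a, b) ∈ combArcs A B r C) (y.1, r) y := by
    rcases hy with hy | hy
    · rw [← hy]
    · exact tooth y.1 hy r y.2
  exact to_spine.trans ((spine x.1 y.1).trans from_spine)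

theorem isStrongSubgraphOn_combArcs {S : Set (V × W)} (hA : G.IsStrongSubgraphOn univ A)
    (hB : H.IsStrongSubgraphOn univ B) (hS : S ⊆ combVerts r C) :
    (G.cartProd H).IsStrongSubgraphOn S (combArcs A B r C) :=
  isStrongSubgraphOn_of_reflTransGen (combArcs_subset_arcSet hA.1 hB.1) hS
    mem_combVerts_of_mem_combArcs fun _ hx _ hy =>
      reflTransGen_combArcs (fun _ _ => hA.reflTransGen trivial trivial)
        (fun _ _ => hB.reflTransGen trivial trivial) hx hy

/-- A spine arc is never a tooth arc, as it would be a loop of `A` or `A'`. -/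
theorem disjoint_combArcs (hA : ∀ x, (x, x) ∉ A) (hA' : ∀ x, (x, x) ∉ A')
    (h : Disjoint A A' ∧ Disjoint B B' ∨ r ≠ r' ∧ Disjoint C C') :
    Disjoint (combArcs A B r C) (combArcs A' B' r' C') := by
  rw [Set.disjoint_left]
  rintro ⟨⟨x, p⟩, ⟨y, q⟩⟩ (⟨hxy, hp, -⟩ | ⟨hx, hyx, hpq⟩)
    (⟨hxy', hp', -⟩ | ⟨hx', hyx', hpq'⟩)
  all_goals dsimp only at *
  · rcases h with ⟨hAA, -⟩ | ⟨hrr, -⟩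
    exacts [disjoint_left.1 hAA hxy hxy', hrr (hp.symm.trans hp')]
  · exact hA x (hyx' ▸ hxy)
  · exact hA' x (hyx ▸ hxy')
  · rcases h with ⟨-, hBB⟩ | ⟨-, hCC⟩
    exacts [disjoint_left.1 hBB hpq hpq', disjoint_left.1 hCC hx hx']

theorem hasDisjointStrongSubgraphs_four_of_combs (hG : ∀ x, ¬ G.Adj x x)
    (hG2 : G.HasDisjointStrongSubgraphs univ 2) (hH2 : H.HasDisjointStrongSubgraphs univ 2)
    {S : Set (V × W)} (r : Fin 2 → W) (C : Fin 2 → Set V) (hr : r 0 ≠ r 1)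
    (hC : Disjoint (C 0) (C 1)) (hS : ∀ j, S ⊆ combVerts (r j) (C j)) :
    (G.cartProd H).HasDisjointStrongSubgraphs S 4 := by
  obtain ⟨A, hA, hAd⟩ := hG2
  obtain ⟨B, hB, hBd⟩ := hH2
  let f : Fin 2 × Fin 2 → Set ((V × W) × (V × W)) := fun ji =>
    combArcs (A ji.2) (B ji.2) (r ji.1) (C ji.1)
  have hf : Pairwise fun k l => Disjoint (f k) (f l) := by
    rintro ⟨j, i⟩ ⟨j', i'⟩ hne
    refine disjoint_combArcs (fun x hx => hG x ((hA i).1 hx))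
      (fun x hx => hG x ((hA i').1 hx)) ?_
    by_cases hi : i = i'
    · subst hi
      have hj : j ≠ j' := fun hj => hne (hj ▸ rfl)
      right
      fin_cases j <;> fin_cases j'
      exacts [absurd rfl hj, ⟨hr, hC⟩, ⟨hr.symm, hC.symm⟩, absurd rfl hj]
    · exact Or.inl ⟨hAd i i' hi, hBd i i' hi⟩
  exact ⟨fun k => f (finProdFinEquiv.symm k),
    fun _ => isStrongSubgraphOn_combArcs (hA _) (hB _) (hS _),
    fun _ _ hkl => hf (finProdFinEquiv.symm.injective.ne hkl)⟩

theorem hasDisjointStrongSubgraphs_four_of_fst_ne [Nontrivial W] (hG : ∀ x, ¬ G.Adj x x)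
    (hG2 : G.HasDisjointStrongSubgraphs univ 2) (hH2 : H.HasDisjointStrongSubgraphs univ 2)
    {u v : V × W} (h : u.1 ≠ v.1) : (G.cartProd H).HasDisjointStrongSubgraphs {u, v} 4 := by
  by_cases hrow : u.2 = v.2
  · obtain ⟨r', hr'⟩ := exists_ne u.2
    refine hasDisjointStrongSubgraphs_four_of_combs hG hG2 hH2 ![u.2, r'] ![∅, {u.1, v.1}]
      hr'.symm (empty_disjoint _) fun j => ?_
    fin_cases j <;> simp [pair_subset_iff, combVerts, hrow]
  · refine hasDisjointStrongSubgraphs_four_of_combs hG hG2 hH2 ![u.2, v.2] ![{v.1}, {u.1}]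
      hrow (disjoint_singleton.2 h.symm) fun j => ?_
    fin_cases j <;> simp [pair_subset_iff, combVerts]

theorem cartProd_hasDisjointStrongSubgraphs_four [Nontrivial V] [Nontrivial W]
    (hG : ∀ x, ¬ G.Adj x x) (hH : ∀ y, ¬ H.Adj y y)
    (hG2 : G.HasDisjointStrongSubgraphs univ 2) (hH2 : H.HasDisjointStrongSubgraphs univ 2)
    {u v : V × W} (huv : u ≠ v) : (G.cartProd H).HasDisjointStrongSubgraphs {u, v} 4 := by
  by_cases h : u.1 = v.1
  · have hswap : u.swap.1 ≠ v.swap.1 := fun h' => huv (Prod.ext h h')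
    simpa [image_pair] using (hasDisjointStrongSubgraphs_four_of_fst_ne hH hH2 hG2 hswap).image
      Prod.swap Prod.swap_injective fun _ _ => cartProd_adj_swap
  · exact hasDisjointStrongSubgraphs_four_of_fst_ne hG hG2 hH2 h

end CartProd

end Digraph

open Digraph

section Cycle

variable {n : ℕ} [NeZero n]

open scoped Fin.NatCast Fin.CommRing

theorem dirCycle_adj_iff {i j : Fin n} : (dirCycle n).Adj i j ↔ j = i + 1 := by
  rw [Fin.ext_iff, Fin.val_add, Fin.val_one', Nat.add_mod_mod]
  rfl

theorem dirCycle_isStrong : (dirCycle n).IsStrong := by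
  intro i j
  have key : ∀ k : ℕ, ReflTransGen (dirCycle n).Adj i (i + k) := by
    intro k
    induction k with
    | zero => simp [ReflTransGen.refl]
    | succ k ih => exact ih.tail (dirCycle_adj_iff.2 (by push_cast; ring))
  simpa using key (j - i).val

theorem biCycle_irrefl (hn : 2 ≤ n) (i : Fin n) : ¬ (biCycle n).Adj i i := by
  have h : (1 : Fin n) ≠ 0 := by rw [Ne, Fin.one_eq_zero_iff]; omega
  rintro (h' | h') <;> exact h (by simpa using (dirCycle_adj_iff.1 h').symm)

theorem biCycle_outDeg_le (i : Fin n) : (biCycle n).outDeg i ≤ 2 := by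
  have hsub : {j | (biCycle n).Adj i j} ⊆ {i + 1, i - 1} := by
    rintro j (h | h)
    · exact Or.inl (dirCycle_adj_iff.1 h)
    · exact Or.inr (eq_sub_of_add_eq (dirCycle_adj_iff.1 h).symm)
  calc (biCycle n).outDeg i ≤ ({i + 1, i - 1} : Set (Fin n)).ncard := ncard_le_ncard hsub
    _ ≤ 2 := (ncard_insert_le _ _).trans (by simp)

theorem biCycle_hasDisjointStrongSubgraphs_two (hn : 3 ≤ n) :
    (biCycle n).HasDisjointStrongSubgraphs univ 2 := by
  have hdisj : Disjoint (dirCycle n).ArcSet (Prod.swap ⁻¹' (dirCycle n).ArcSet) := by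
    refine disjoint_left.2 fun e h h' => ?_
    have h2 : (1 + 1 : Fin n) = 0 := by
      simpa [dirCycle_adj_iff.1 h, add_assoc] using (dirCycle_adj_iff.1 h').symm
    have := congrArg Fin.val h2
    rw [Fin.val_add, Fin.val_one', Nat.mod_eq_of_lt (by omega : 1 < n)] at this
    simp [Nat.mod_eq_of_lt (by omega : 2 < n)] at this
  refine ⟨![(dirCycle n).ArcSet, Prod.swap ⁻¹' (dirCycle n).ArcSet], fun i => ?_, ?_⟩
  · fin_cases i
    · exact isStrongSubgraphOn_of_reflTransGen (L := univ) (fun _ h => Or.inl h) subset_rfl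
        (fun _ _ => ⟨trivial, trivial⟩) fun x _ y _ => dirCycle_isStrong x y
    · exact isStrongSubgraphOn_of_reflTransGen (L := univ) (fun _ h => Or.inr h) subset_rfl
        (fun _ _ => ⟨trivial, trivial⟩) fun x _ y _ =>
          ReflTransGen.swap x y (dirCycle_isStrong y x)
  · intro i j hij
    fin_cases i <;> fin_cases j
    exacts [absurd rfl hij, hdisj, hdisj.symm, absurd rfl hij]

end Cycle

theorem stmt18 (n m : ℕ) (hn : 3 ≤ n) (hm : 3 ≤ m) :
    ((biCycle n).cartProd (biCycle m)).lambdaK 2 = 4 := by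
  have : NeZero n := ⟨by omega⟩
  have : NeZero m := ⟨by omega⟩
  have : Nontrivial (Fin n) := Fin.nontrivial_iff_two_le.2 (by omega)
  have : Nontrivial (Fin m) := Fin.nontrivial_iff_two_le.2 (by omega)
  refine lambdaK_eq_of_forall ?_ fun S hS => ?_
  · obtain ⟨x, y, hxy⟩ := exists_pair_ne (Fin n × Fin m)
    exact ⟨{x, y}, ncard_pair hxy⟩
  · obtain ⟨u, v, huv, rfl⟩ := ncard_eq_two.1 hS
    have hfour := cartProd_hasDisjointStrongSubgraphs_four (biCycle_irrefl (by omega))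
      (biCycle_irrefl (by omega)) (biCycle_hasDisjointStrongSubgraphs_two hn)
      (biCycle_hasDisjointStrongSubgraphs_two hm) huv
    refine lambdaS_eq_of_outDeg_le hfour (mem_insert u {v}) (mem_insert_of_mem u rfl) huv
      (toFinite _) ?_
    calc _ ≤ (biCycle n).outDeg u.1 + (biCycle m).outDeg u.2 := outDeg_cartProd_le u.1 u.2
      _ ≤ 2 + 2 := add_le_add (biCycle_outDeg_le _) (biCycle_outDeg_le _)
end

section
/- For trees T_n and T_m with n, m ≥ 2 vertices, λ_2(↔T_n □ ↔T_m) = 2, where ↔T denotes the complete biorientation of a tree T. -/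
/-!
A vertex `(l₁, l₂)` made of two leaves has only two out-neighbours in `↔T₁ □ ↔T₂`, and every
strong subgraph containing it and a second vertex leaves it by an arc of its own; so that pair
has `λ ≤ 2`. Conversely, since `↔T₁ □ ↔T₂ = ↔(T₁ □ T₂)`, any two vertices `x, y` can be taken as
corners of a rectangle spanned by a path of `T₁` and a path of `T₂`. Its boundary is a closed
trail, and the cycle traversed in either direction gives two arc-disjoint strong subgraphs
containing `x` and `y`.
-/

open Relation

namespace Digraph

variable {V : Type*} {D : Digraph V} {S : Set V} {a b : V}

theorem IsStrongSubgraphOn.exists_arc_from_s19 {B : Set (V × V)} (h : D.IsStrongSubgraphOn S B)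
    (ha : a ∈ S) (hb : b ∈ S) (hab : a ≠ b) : ∃ c, (a, c) ∈ B := by
  rcases (h.2 a (.inl ha) b (.inl hb)).cases_head with h | ⟨c, hc, -⟩
  exacts [absurd h hab, ⟨c, hc⟩]

/-- Each of `k` arc-disjoint `S`-strong subgraphs leaves `a` by an arc of its own. -/
theorem card_le_outDeg_of_pairwise_disjoint [Finite V] (ha : a ∈ S) (hb : b ∈ S) (hab : a ≠ b)
    {k : ℕ} {f : Fin k → Set (V × V)} (hf : ∀ i, D.IsStrongSubgraphOn S (f i))
    (hdisj : ∀ i j, i ≠ j → Disjoint (f i) (f j)) : k ≤ D.outDeg a := by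
  choose g hg using fun i => (hf i).exists_arc_from_s19 ha hb hab
  have hinj : Function.Injective fun i => (⟨g i, (hf i).1 (hg i)⟩ : {w | D.Adj a w}) := by
    intro i j hij
    by_contra hne
    have hgij : g i = g j := congrArg Subtype.val hij
    exact Set.disjoint_left.1 (hdisj i j hne) (hg i) (hgij ▸ hg j)
  simpa only [Nat.card_eq_fintype_card, Fintype.card_fin, Nat.card_coe_set_eq, outDeg]
    using Nat.card_le_card_of_injective _ hinj

theorem lambdaS_le_outDeg [Finite V] (ha : a ∈ S) (hb : b ∈ S) (hab : a ≠ b) :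
    D.lambdaS S ≤ D.outDeg a :=
  csSup_le' fun _ ⟨_, hf, hdisj⟩ => card_le_outDeg_of_pairwise_disjoint ha hb hab hf hdisj

theorem two_le_lambdaS [Finite V] {B₁ B₂ : Set (V × V)} (h₁ : D.IsStrongSubgraphOn {a, b} B₁)
    (h₂ : D.IsStrongSubgraphOn {a, b} B₂) (hB : Disjoint B₁ B₂) (hab : a ≠ b) :
    2 ≤ D.lambdaS {a, b} := by
  have hbdd : BddAbove {k | ∃ f : Fin k → Set (V × V),
      (∀ i, D.IsStrongSubgraphOn {a, b} (f i)) ∧ ∀ i j, i ≠ j → Disjoint (f i) (f j)} :=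
    ⟨D.outDeg a, fun _ ⟨_, hf, hdisj⟩ => card_le_outDeg_of_pairwise_disjoint
      (Set.mem_insert a {b}) (Set.mem_insert_of_mem a rfl) hab hf hdisj⟩
  refine le_csSup hbdd ⟨![B₁, B₂], fun i => ?_, fun i j hij => ?_⟩
  · fin_cases i
    exacts [h₁, h₂]
  · fin_cases i <;> fin_cases j
    all_goals first | exact absurd rfl hij | exact hB | exact hB.symm

theorem lambdaK_eq_of_forall_le {k m : ℕ} (hle : ∀ S : Set V, S.ncard = k → m ≤ D.lambdaS S)
    (hex : ∃ S : Set V, S.ncard = k ∧ D.lambdaS S ≤ m) : D.lambdaK k = m := by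
  obtain ⟨S, hS, hSm⟩ := hex
  have hSeq : D.lambdaS S = m := le_antisymm hSm (hle S hS)
  exact le_antisymm (Nat.sInf_le ⟨S, hS, hSeq⟩)
    (le_csInf ⟨m, S, hS, hSeq⟩ fun _ ⟨T, hT, hTeq⟩ => hTeq ▸ hle T hT)

end Digraph

namespace SimpleGraph

variable {V W : Type*} {G : SimpleGraph V} {H : SimpleGraph W}

theorem biorient_boxProd (G : SimpleGraph V) (H : SimpleGraph W) :
    (G □ H).biorient = G.biorient.cartProd H.biorient := by
  ext x y
  simp only [biorient, Digraph.cartProd, boxProd_adj]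
  tauto

theorem outDeg_biorient (G : SimpleGraph V) (v : V) [Fintype (G.neighborSet v)] :
    G.biorient.outDeg v = G.degree v :=
  (Nat.card_eq_fintype_card (α := G.neighborSet v)).trans (card_neighborSet_eq_degree G v)

namespace Walk

def arcs {u v : V} (w : G.Walk u v) : Set (V × V) := {p | ∃ d ∈ w.darts, d.toProd = p}

theorem arcs_subset_arcSet {u v : V} (w : G.Walk u v) : w.arcs ⊆ G.biorient.ArcSet := by
  rintro _ ⟨d, -, rfl⟩
  exact d.adj

theorem mem_support_of_mem_arcs {u v : V} {w : G.Walk u v} {p : V × V} (h : p ∈ w.arcs) :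
    p.1 ∈ w.support ∧ p.2 ∈ w.support := by
  obtain ⟨d, hd, rfl⟩ := h
  exact ⟨w.dart_fst_mem_support_of_mem_darts hd, w.dart_snd_mem_support_of_mem_darts hd⟩

theorem mem_arcs_reverse {u v : V} {w : G.Walk u v} {p : V × V} :
    p ∈ w.reverse.arcs ↔ p.swap ∈ w.arcs := by
  simp only [arcs, darts_reverse, List.mem_reverse, List.mem_map, Set.mem_ofPred_eq]
  constructor
  · rintro ⟨_, ⟨d, hd, rfl⟩, rfl⟩
    exact ⟨d, hd, by rw [Dart.symm_toProd, Prod.swap_swap]⟩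
  · rintro ⟨d, hd, hp⟩
    exact ⟨d.symm, ⟨d, hd, rfl⟩, by rw [Dart.symm_toProd, hp, Prod.swap_swap]⟩

theorem reflTransGen_arcs {u v : V} (w : G.Walk u v) :
    ReflTransGen (fun a b => (a, b) ∈ w.arcs) u v := by
  induction w with
  | nil => exact .refl
  | cons h w ih =>
    refine .head ⟨⟨_, h⟩, List.mem_cons_self, rfl⟩ (ReflTransGen.mono ?_ _ _ ih)
    rintro a b ⟨d, hd, hab⟩
    exact ⟨d, List.mem_cons_of_mem _ hd, hab⟩

theorem reflTransGen_arcs_of_mem_support [DecidableEq V] {u v z : V} (w : G.Walk u v)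
    (hz : z ∈ w.support) :
    ReflTransGen (fun a b => (a, b) ∈ w.arcs) u z ∧
      ReflTransGen (fun a b => (a, b) ∈ w.arcs) z v := by
  refine ⟨ReflTransGen.mono ?_ _ _ (w.takeUntil z hz).reflTransGen_arcs,
    ReflTransGen.mono ?_ _ _ (w.dropUntil z hz).reflTransGen_arcs⟩ <;> rintro a b ⟨d, hd, hab⟩
  · exact ⟨d, w.darts_takeUntil_subset_darts hz hd, hab⟩
  · exact ⟨d, w.darts_dropUntil_subset_darts hz hd, hab⟩

/-- Around a closed walk every vertex reaches every other one. -/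
theorem isStrongSubgraphOn_arcs {u : V} (w : G.Walk u u) {S : Set V}
    (hS : ∀ z ∈ S, z ∈ w.support) : G.biorient.IsStrongSubgraphOn S w.arcs := by
  classical
  have hmem : ∀ z ∈ S ∪ {v | ∃ e ∈ w.arcs, v = e.1 ∨ v = e.2}, z ∈ w.support := by
    rintro z (hz | ⟨e, he, rfl | rfl⟩)
    exacts [hS z hz, (mem_support_of_mem_arcs he).1, (mem_support_of_mem_arcs he).2]
  refine ⟨w.arcs_subset_arcSet, fun x hx y hy => ?_⟩
  exact (w.reflTransGen_arcs_of_mem_support (hmem x hx)).2.trans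
    (w.reflTransGen_arcs_of_mem_support (hmem y hy)).1

/-- A trail never uses an edge twice, so it never traverses an arc and its reverse. -/
theorem IsTrail.disjoint_arcs_reverse {u v : V} {w : G.Walk u v} (hw : w.IsTrail) :
    Disjoint w.arcs w.reverse.arcs := by
  rw [Set.disjoint_left]
  rintro p ⟨d, hd, rfl⟩ hrev
  obtain ⟨d', hd', hd'p⟩ := mem_arcs_reverse.1 hrev
  have hsymm : d' = d.symm := Dart.ext _ _ (by rw [hd'p, Dart.symm_toProd])
  have hedges : d'.edge = d.edge := by rw [hsymm, Dart.edge_symm]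
  rw [isTrail_def, edges] at hw
  exact d.symm_ne (hsymm ▸ List.inj_on_of_nodup_map hw hd' hd hedges)

end Walk

/-- A closed trail and its reversal are two arc-disjoint strong subgraphs of `G.biorient`. -/
theorem two_le_lambdaS_biorient [Finite V] {u x y : V} (w : G.Walk u u) (hw : w.IsTrail)
    (hx : x ∈ w.support) (hy : y ∈ w.support) (hxy : x ≠ y) :
    2 ≤ G.biorient.lambdaS {x, y} := by
  have hS : ∀ z ∈ ({x, y} : Set V), z ∈ w.support := by
    rintro z (rfl | rfl)
    exacts [hx, hy]
  refine Digraph.two_le_lambdaS (w.isStrongSubgraphOn_arcs hS)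
    (w.reverse.isStrongSubgraphOn_arcs fun z hz => ?_) hw.disjoint_arcs_reverse hxy
  simpa using hS z hz

theorem Connected.exists_isPath_ne [Nontrivial V] (hG : G.Connected) (x y : V) :
    ∃ v, ∃ p : G.Walk x v, p.IsPath ∧ v ≠ x ∧ (y = x ∨ y = v) := by
  by_cases hyx : y = x
  · obtain ⟨v, hv⟩ := exists_ne x
    obtain ⟨p, hp⟩ := hG.exists_isPath x v
    exact ⟨v, p, hp, hv, .inl hyx⟩
  · obtain ⟨p, hp⟩ := hG.exists_isPath x y
    exact ⟨y, p, hp, hyx, .inr rfl⟩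

namespace Walk

theorem snd_eq_of_mem_edges_boxProdLeft {a₁ a₂ : V} {b : W} {p : G.Walk a₁ a₂}
    {e : Sym2 (V × W)} (he : e ∈ (p.boxProdLeft H b).edges) : ∀ z ∈ e, z.2 = b := by
  obtain ⟨e, -, rfl⟩ := List.mem_map.1 (edges_map _ p ▸ he)
  intro z hz
  obtain ⟨a, -, rfl⟩ := Sym2.mem_map.1 hz
  rfl

theorem fst_eq_of_mem_edges_boxProdRight {b₁ b₂ : W} {a : V} {q : H.Walk b₁ b₂}
    {e : Sym2 (V × W)} (he : e ∈ (q.boxProdRight G a).edges) : ∀ z ∈ e, z.1 = a := by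
  obtain ⟨e, -, rfl⟩ := List.mem_map.1 (edges_map _ q ▸ he)
  intro z hz
  obtain ⟨b, -, rfl⟩ := Sym2.mem_map.1 hz
  rfl

end Walk

theorem not_forall_fst_eq_and_snd_eq_of_mem_edgeSet_boxProd {e : Sym2 (V × W)}
    (he : e ∈ (G □ H).edgeSet) (a : V) (b : W) :
    ¬ ((∀ z ∈ e, z.1 = a) ∧ ∀ z ∈ e, z.2 = b) := by
  induction e using Sym2.ind with
  | h x y =>
    rintro ⟨h₁, h₂⟩
    have hxy : x = y := by
      simp only [Sym2.mem_iff, forall_eq_or_imp, forall_eq] at h₁ h₂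
      exact Prod.ext (h₁.1.trans h₁.2.symm) (h₂.1.trans h₂.2.symm)
    exact (G □ H).loopless.irrefl x (hxy ▸ he)

-- The trail is the boundary of the rectangle spanned by `p` and `q`.
theorem exists_isTrail_boxProd {x₁ v₁ : V} {x₂ v₂ : W} {p : G.Walk x₁ v₁} {q : H.Walk x₂ v₂}
    (hp : p.IsPath) (hq : q.IsPath) (hv₁ : v₁ ≠ x₁) (hv₂ : v₂ ≠ x₂) :
    ∃ w : (G □ H).Walk (x₁, x₂) (x₁, x₂), w.IsTrail ∧
      ∀ y : V × W, (y.1 = x₁ ∨ y.1 = v₁) → (y.2 = x₂ ∨ y.2 = v₂) → y ∈ w.support := by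
  refine ⟨(p.boxProdLeft H x₂).append ((q.boxProdRight G v₁).append
    ((p.reverse.boxProdLeft H v₂).append (q.reverse.boxProdRight G x₁))), ?_, ?_⟩
  · have hrow : ∀ {a a' : V} {r : G.Walk a a'} (b : W), r.IsPath →
        (r.boxProdLeft H b).edges.Nodup :=
      fun b hr => (hr.map (G.boxProdLeft H b).injective).isTrail.edges_nodup
    have hcol : ∀ {b b' : W} {r : H.Walk b b'} (a : V), r.IsPath →
        (r.boxProdRight G a).edges.Nodup :=
      fun a hr => (hr.map (G.boxProdRight H a).injective).isTrail.edges_nodup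
    have hcross : ∀ {e : Sym2 (V × W)} {a : V} {b : W}, e ∈ (G □ H).edgeSet →
        (∀ z ∈ e, z.1 = a) → (∀ z ∈ e, z.2 = b) → False :=
      fun he h₁ h₂ => not_forall_fst_eq_and_snd_eq_of_mem_edgeSet_boxProd he _ _ ⟨h₁, h₂⟩
    simp only [Walk.isTrail_def, Walk.edges_append, List.nodup_append, List.mem_append]
    refine ⟨hrow _ hp, ⟨hcol _ hq, ⟨hrow _ hp.reverse, hcol _ hq.reverse, ?_⟩, ?_⟩, ?_⟩
    · rintro e h₃ _ h₄ rfl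
      exact hcross (Walk.edges_subset_edgeSet _ h₃) (Walk.fst_eq_of_mem_edges_boxProdRight h₄)
        (Walk.snd_eq_of_mem_edges_boxProdLeft h₃)
    · rintro e h₂ _ (h₃ | h₄) rfl
      · exact hcross (Walk.edges_subset_edgeSet _ h₂) (Walk.fst_eq_of_mem_edges_boxProdRight h₂)
          (Walk.snd_eq_of_mem_edges_boxProdLeft h₃)
      · exact hv₁ ((Walk.fst_eq_of_mem_edges_boxProdRight h₂ _ e.out_fst_mem).symm.trans
          (Walk.fst_eq_of_mem_edges_boxProdRight h₄ _ e.out_fst_mem))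
    · rintro e h₁ _ (h₂ | h₃ | h₄) rfl
      · exact hcross (Walk.edges_subset_edgeSet _ h₁) (Walk.fst_eq_of_mem_edges_boxProdRight h₂)
          (Walk.snd_eq_of_mem_edges_boxProdLeft h₁)
      · exact hv₂ ((Walk.snd_eq_of_mem_edges_boxProdLeft h₃ _ e.out_fst_mem).symm.trans
          (Walk.snd_eq_of_mem_edges_boxProdLeft h₁ _ e.out_fst_mem))
      · exact hcross (Walk.edges_subset_edgeSet _ h₁) (Walk.fst_eq_of_mem_edges_boxProdRight h₄)
          (Walk.snd_eq_of_mem_edges_boxProdLeft h₁)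
  · rintro ⟨y₁, y₂⟩ (rfl | rfl) (rfl | rfl) <;> simp

theorem lambdaS_biorient_le_degree [Finite V] {x y : V} [Fintype (G.neighborSet x)]
    (hxy : x ≠ y) : G.biorient.lambdaS {x, y} ≤ G.degree x :=
  (Digraph.lambdaS_le_outDeg (Set.mem_insert x {y}) (Set.mem_insert_of_mem x rfl) hxy).trans_eq
    (G.outDeg_biorient x)

theorem two_le_lambdaS_biorient_boxProd [Finite V] [Finite W] [Nontrivial V] [Nontrivial W]
    (hG : G.Connected) (hH : H.Connected) {x y : V × W} (hxy : x ≠ y) :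
    2 ≤ (G □ H).biorient.lambdaS {x, y} := by
  obtain ⟨v₁, p, hp, hv₁, hy₁⟩ := hG.exists_isPath_ne x.1 y.1
  obtain ⟨v₂, q, hq, hv₂, hy₂⟩ := hH.exists_isPath_ne x.2 y.2
  obtain ⟨w, hw, hcorner⟩ := exists_isTrail_boxProd hp hq hv₁ hv₂
  exact two_le_lambdaS_biorient w hw (hcorner x (.inl rfl) (.inl rfl)) (hcorner y hy₁ hy₂) hxy

end SimpleGraph

theorem stmt19 {V W : Type*} [Fintype V] [Fintype W]
    (T₁ : SimpleGraph V) (T₂ : SimpleGraph W)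
    (h₁ : T₁.IsTree) (h₂ : T₂.IsTree)
    (hn : 2 ≤ Fintype.card V) (hm : 2 ≤ Fintype.card W) :
    (T₁.biorient.cartProd T₂.biorient).lambdaK 2 = 2 := by
  classical
  have : Nontrivial V := Fintype.one_lt_card_iff_nontrivial.1 hn
  have : Nontrivial W := Fintype.one_lt_card_iff_nontrivial.1 hm
  obtain ⟨l₁, hl₁⟩ := h₁.exists_vert_degree_one_of_nontrivial
  obtain ⟨l₂, hl₂⟩ := h₂.exists_vert_degree_one_of_nontrivial
  obtain ⟨y, hy⟩ := exists_ne (l₁, l₂)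
  rw [← SimpleGraph.biorient_boxProd]
  refine Digraph.lambdaK_eq_of_forall_le (fun S hS => ?_)
    ⟨{(l₁, l₂), y}, Set.ncard_pair hy.symm, ?_⟩
  · obtain ⟨x, x', hxx', rfl⟩ := Set.ncard_eq_two.1 hS
    exact SimpleGraph.two_le_lambdaS_biorient_boxProd h₁.connected h₂.connected hxx'
  · calc _ ≤ (T₁ □ T₂).degree (l₁, l₂) := SimpleGraph.lambdaS_biorient_le_degree hy.symm
      _ = 2 := by rw [SimpleGraph.degree_boxProd, hl₁, hl₂]
end
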